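/- Assume Φ(f) lies in the center of ℰ⁻ for every tail-measurable f, and that Φ(f·χ_Δ) = Φ(f)Φ(χ_Δ) for all cylinder sets Δ. Then for every nonnegative f ∈ ℒ_∞ and every normal state ω on ℰ⁻, the positive normal functional Φ(f)^*(ω) defined by Φ(f)^*(ω)(A) := ω(Φ(f)^{1/2} A Φ(f)^{1/2}) satisfies μ_{Φ(f)^*(ω)} = μ_ω^f, where μ_ω^f(Δ) := ∫_Ξ f·χ_Δ dμ_ω for Δ ∈ Σ. In particular, if ω(Φ(f)) ≠ 0, then ω^f := ω(Φ(f))^{-1} Φ(f)^*(ω) is a normal state on ℰ⁻ whose associated LSW measure is the normalized f-weighted measure. -/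

import Mathlib

open MeasureTheory Filter
open scoped ENNReal NNReal BigOperators

noncomputable section

/-- A normal state given by a density matrix, presented through a (sub-)orthonormal family
of vectors `ψ i` with `∑ ‖ψ i‖² = 1`:  `ω(A) = ∑ ⟪ψ i, A ψ i⟫`. -/
structure DensityState (H : Type*) [NormedAddCommGroup H] [InnerProductSpace ℂ H] where
  ψ : ℕ → H
  summable' : Summable fun i => ‖ψ i‖ ^ 2
  norm_one : ∑' i, ‖ψ i‖ ^ 2 = 1

/-- The value `ω(A) = tr(P_ω A)` of a normal state on an operator. -/
def DensityState.val {H : Type*} [NormedAddCommGroup H] [InnerProductSpace ℂ H]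
    (ω : DensityState H) (A : H →L[ℂ] H) : ℂ :=
  ∑' i, @inner ℂ H _ (ω.ψ i) (A (ω.ψ i))

/-- The cylinder set of histories whose first `n` outcomes are `v`. -/
def cyl {𝒳 : Type*} {n : ℕ} (v : Fin n → 𝒳) : Set (ℕ → 𝒳) :=
  {x | ∀ i : Fin n, x (i : ℕ) = v i}

/-- `Π_{ξ^{(m,n)}} = π_{ξ_m}(m) ⋯ π_{ξ_{n-1}}(n-1)` (half-open convention `[m,n)`). -/
def blockOp {H 𝒳 : Type*} [NormedAddCommGroup H] [InnerProductSpace ℂ H]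
    (π : ℕ → 𝒳 → (H →L[ℂ] H)) (m n : ℕ) (ξ : ℕ → 𝒳) : H →L[ℂ] H :=
  ((List.range' m (n - m)).map fun k => π k (ξ k)).prod

/-- `Π_{ξ^{(n)}} = π_{ξ₁}(1) ⋯ π_{ξ_n}(n)` for the first `n` outcomes `v`. -/
def histOp {H 𝒳 : Type*} [NormedAddCommGroup H] [InnerProductSpace ℂ H]
    (π : ℕ → 𝒳 → (H →L[ℂ] H)) {n : ℕ} (v : Fin n → 𝒳) : H →L[ℂ] H :=
  (List.ofFn fun i : Fin n => π (i : ℕ) (v i)).prod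

/-- `μ` is the LSW measure of the functional `φ`:
`μ(ξ₁,…,ξ_n) = φ(Π_{ξ^{(n)}} (Π_{ξ^{(n)}})^*)`. -/
def IsLSW {H 𝒳 : Type*} [NormedAddCommGroup H] [InnerProductSpace ℂ H] [CompleteSpace H]
    [MeasurableSpace 𝒳] (π : ℕ → 𝒳 → (H →L[ℂ] H)) (φ : (H →L[ℂ] H) → ℂ)
    (μ : Measure (ℕ → 𝒳)) : Prop :=
  ∀ (n : ℕ) (v : Fin n → 𝒳),
    μ (cyl v) = ENNReal.ofReal (φ (histOp π v * star (histOp π v))).re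

def shiftAlg (𝒳 : Type*) [MeasurableSpace 𝒳] (n : ℕ) : MeasurableSpace (ℕ → 𝒳) :=
  MeasurableSpace.comap (fun (x : ℕ → 𝒳) (i : ℕ) => x (i + n))
    (inferInstance : MeasurableSpace (ℕ → 𝒳))

def tailAlg (𝒳 : Type*) [MeasurableSpace 𝒳] : MeasurableSpace (ℕ → 𝒳) :=
  ⨅ n : ℕ, shiftAlg 𝒳 n

def IsCylinder {𝒳 : Type*} (S : Set (ℕ → 𝒳)) : Prop :=
  ∃ (n : ℕ) (Λ : Set (Fin n → 𝒳)), S = {x | (fun i : Fin n => x (i : ℕ)) ∈ Λ}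

/-!
Testing `Φ(f)` and `Φ(χ_Δ)` against vector states shows `Φ(f) ≥ 0` and
`Φ(χ_{ξ^{(n)}}) = Π_{ξ^{(n)}} Π_{ξ^{(n)}}^*`. Since `Φ(f)` is central, `Φ(f)^{1/2}` commutes with
`P = Π Π^*`, so `ω(Φ(f)^{1/2} P Φ(f)^{1/2}) = ω(Φ(f) P) = ω(Φ(f χ_Δ)) = ∫_Δ f dμ_ω`, which is
the `f`-weighted measure of the cylinder `Δ`. Normalizing by `ω(Φ(f)) = ∫ f dμ_ω` gives the state.
-/

open ComplexOrder
open scoped InnerProductSpace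

namespace DensityState

variable {H : Type*} [NormedAddCommGroup H] [InnerProductSpace ℂ H]

def ofUnit (ψ : H) (hψ : ‖ψ‖ = 1) : DensityState H where
  ψ := Pi.single 0 ψ
  summable' := summable_of_ne_finset_zero (s := {0}) fun i hi => by
    simp [Finset.mem_singleton.not.mp hi]
  norm_one := by
    rw [tsum_eq_single 0 fun i hi => by simp [hi]]
    simp [hψ]

@[simp]
lemma ofUnit_val (ψ : H) (hψ : ‖ψ‖ = 1) (A : H →L[ℂ] H) :
    (ofUnit ψ hψ).val A = ⟪ψ, A ψ⟫_ℂ := by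
  rw [val, tsum_eq_single 0 fun i hi => by simp [ofUnit, hi]]
  simp [ofUnit]

end DensityState

section UnitVectors

variable {H : Type*} [NormedAddCommGroup H] [InnerProductSpace ℂ H]

lemma exists_unit_inner_map_self_eq {x : H} (hx : x ≠ 0) :
    ∃ u : H, ‖u‖ = 1 ∧
      ∀ T : H →L[ℂ] H, ⟪x, T x⟫_ℂ = ((‖x‖ ^ 2 : ℝ) : ℂ) * ⟪u, T u⟫_ℂ := by
  refine ⟨(‖x‖ : ℂ)⁻¹ • x, ?_, fun T => ?_⟩
  · rw [norm_smul, norm_inv, Complex.norm_real, norm_norm, inv_mul_cancel₀ (by simpa using hx)]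
  · rw [map_smul, inner_smul_left, inner_smul_right, Complex.conj_inv, Complex.conj_ofReal]
    field_simp
    push_cast
    ring

lemma ContinuousLinearMap.ext_of_inner_unit {A B : H →L[ℂ] H}
    (h : ∀ ψ : H, ‖ψ‖ = 1 → ⟪ψ, A ψ⟫_ℂ = ⟪ψ, B ψ⟫_ℂ) : A = B := by
  refine ContinuousLinearMap.coe_injective <| (ext_inner_map _ _).mp fun x => ?_
  have hx : ⟪x, A x⟫_ℂ = ⟪x, B x⟫_ℂ := by
    rcases eq_or_ne x 0 with rfl | hx
    · simp
    obtain ⟨u, hu, hxu⟩ := exists_unit_inner_map_self_eq hx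
    rw [hxu, hxu, h u hu]
  simpa only [ContinuousLinearMap.coe_coe, inner_conj_symm] using congrArg (starRingEnd ℂ) hx

lemma ContinuousLinearMap.nonneg_of_inner_unit {A : H →L[ℂ] H}
    (h : ∀ ψ : H, ‖ψ‖ = 1 → 0 ≤ ⟪ψ, A ψ⟫_ℂ) : 0 ≤ A := by
  have hx : ∀ x : H, 0 ≤ ⟪x, A x⟫_ℂ := fun x => by
    rcases eq_or_ne x 0 with rfl | hx
    · simp
    obtain ⟨u, hu, hxu⟩ := exists_unit_inner_map_self_eq hx
    rw [hxu]
    exact mul_nonneg (by exact_mod_cast sq_nonneg ‖x‖) (h u hu)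
  rw [ContinuousLinearMap.nonneg_iff_isPositive, ContinuousLinearMap.isPositive_iff_complex]
  intro x
  have hz : 0 ≤ ⟪A x, x⟫_ℂ := by
    rw [← inner_conj_symm]
    exact star_nonneg_iff.mpr (hx x)
  exact ⟨(Complex.eq_re_of_ofReal_le (r := 0) (by simpa using hz)).symm,
    (Complex.nonneg_iff.mp hz).1⟩

end UnitVectors

lemma CFC.sqrt_mul_mul_sqrt_of_commute {A : Type*} [CStarAlgebra A] [PartialOrder A]
    [StarOrderedRing A] {a b : A} (ha : 0 ≤ a) (hab : Commute a b) :
    CFC.sqrt a * b * CFC.sqrt a = a * b := by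
  have hsqrt : Commute (CFC.sqrt a) b := CFC.sqrt_eq_cfc (a := a) ▸ hab.cfc_nnreal _
  rw [hsqrt.eq, mul_assoc, CFC.sqrt_mul_sqrt_self a ha, hab.eq]

lemma ContinuousLinearMap.inner_apply_mul_star_self {H : Type*} [NormedAddCommGroup H]
    [InnerProductSpace ℂ H] [CompleteSpace H] (T : H →L[ℂ] H) (ψ : H) :
    ⟪ψ, (T * star T) ψ⟫_ℂ = ((‖(ContinuousLinearMap.adjoint T) ψ‖ ^ 2 : ℝ) : ℂ) := by
  rw [mul_apply_eq_comp, ContinuousLinearMap.star_eq_adjoint,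
    ← ContinuousLinearMap.adjoint_inner_left, inner_self_eq_norm_sq_to_K]
  norm_cast

lemma MeasureTheory.withDensity_ofReal_apply {Ω : Type*} [MeasurableSpace Ω] {μ : Measure Ω}
    {f : Ω → ℝ} (hf : Integrable f μ) (hf0 : ∀ x, 0 ≤ f x) {s : Set Ω} (hs : MeasurableSet s) :
    μ.withDensity (fun x => ENNReal.ofReal (f x)) s = ENNReal.ofReal (∫ x in s, f x ∂μ) := by
  rw [withDensity_apply _ hs,
    ofReal_integral_eq_lintegral_ofReal hf.restrict (ae_of_all _ hf0)]

section Histories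

variable {𝒳 : Type*}

lemma cyl_of_fin_zero (v : Fin 0 → 𝒳) : cyl v = Set.univ := by
  ext x; simp [cyl]

lemma isCylinder_cyl {n : ℕ} (v : Fin n → 𝒳) : IsCylinder (cyl v) :=
  ⟨n, {v}, by ext x; simp [cyl, funext_iff]⟩

variable [MeasurableSpace 𝒳]

lemma measurableSet_cyl [MeasurableSingletonClass 𝒳] {n : ℕ} (v : Fin n → 𝒳) :
    MeasurableSet (cyl v) := by
  have : cyl v = ⋂ i : Fin n, (fun x : ℕ → 𝒳 => x i) ⁻¹' {v i} := by
    ext x; simp [cyl]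
  rw [this]
  exact .iInter fun i => measurable_pi_apply _ (measurableSet_singleton _)

lemma tailAlg_le : tailAlg 𝒳 ≤ MeasurableSpace.pi :=
  (iInf_le _ 0).trans_eq MeasurableSpace.comap_id

end Histories

lemma histOp_mem {H 𝒳 S : Type*} [NormedAddCommGroup H] [InnerProductSpace ℂ H]
    [SetLike S (H →L[ℂ] H)] [SubmonoidClass S (H →L[ℂ] H)] {s : S}
    {π : ℕ → 𝒳 → (H →L[ℂ] H)} (hπ : ∀ k x, π k x ∈ s) {n : ℕ} (v : Fin n → 𝒳) :
    histOp π v ∈ s :=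
  list_prod_mem fun _ hx => by
    obtain ⟨i, rfl⟩ := List.mem_ofFn.mp hx
    exact hπ _ _

section LSW

variable {H 𝒳 : Type*} [NormedAddCommGroup H] [InnerProductSpace ℂ H] [CompleteSpace H]
  [MeasurableSpace 𝒳] {π : ℕ → 𝒳 → (H →L[ℂ] H)} {φ : (H →L[ℂ] H) → ℂ} {ν : Measure (ℕ → 𝒳)}

lemma IsLSW.isFiniteMeasure (h : IsLSW π φ ν) : IsFiniteMeasure ν where
  measure_univ_lt_top := by
    rw [← cyl_of_fin_zero (Fin.elim0 : Fin 0 → 𝒳), h]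
    exact ENNReal.ofReal_lt_top

lemma IsLSW.inv_smul (h : IsLSW π φ ν) {c : ℝ} (hc : 0 < c) (hν : ν Set.univ = ENNReal.ofReal c) :
    IsLSW π (fun A => (c : ℂ)⁻¹ * φ A) ((ν Set.univ)⁻¹ • ν) := by
  intro n v
  rw [Measure.smul_apply, smul_eq_mul, hν, h, ← ENNReal.ofReal_inv_of_pos hc,
    ← ENNReal.ofReal_mul (inv_nonneg.mpr hc.le), ← Complex.ofReal_inv, Complex.re_ofReal_mul]

end LSW

def IsIntegralRepresentation {H 𝒳 : Type*} [NormedAddCommGroup H] [InnerProductSpace ℂ H]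
    [MeasurableSpace 𝒳] (μ : DensityState H → Measure (ℕ → 𝒳))
    (Φ : ((ℕ → 𝒳) → ℂ) → (H →L[ℂ] H)) : Prop :=
  ∀ f : (ℕ → 𝒳) → ℂ, Measurable f → (∃ C, ∀ ξ, ‖f ξ‖ ≤ C) →
    ∀ ω : DensityState H, ω.val (Φ f) = ∫ ξ, f ξ ∂(μ ω)

namespace IsIntegralRepresentation

variable {H 𝒳 : Type*} [NormedAddCommGroup H] [InnerProductSpace ℂ H] [MeasurableSpace 𝒳]
  {μ : DensityState H → Measure (ℕ → 𝒳)} {Φ : ((ℕ → 𝒳) → ℂ) → (H →L[ℂ] H)}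
  {f : (ℕ → 𝒳) → ℝ}

lemma val_ofReal (hΦ : IsIntegralRepresentation μ Φ) (hf : Measurable f) {C : ℝ}
    (hC : ∀ ξ, ‖f ξ‖ ≤ C) (ω : DensityState H) :
    ω.val (Φ fun ξ => (f ξ : ℂ)) = ((∫ ξ, f ξ ∂(μ ω) : ℝ) : ℂ) := by
  rw [hΦ _ hf.complex_ofReal ⟨C, by simpa using hC⟩, integral_complex_ofReal]

lemma nonneg (hΦ : IsIntegralRepresentation μ Φ) (hf : Measurable f) {C : ℝ}
    (hC : ∀ ξ, ‖f ξ‖ ≤ C) (hf0 : ∀ ξ, 0 ≤ f ξ) : 0 ≤ Φ fun ξ => (f ξ : ℂ) :=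
  ContinuousLinearMap.nonneg_of_inner_unit fun ψ hψ => by
    rw [← DensityState.ofUnit_val ψ hψ, hΦ.val_ofReal hf hC]
    exact_mod_cast integral_nonneg hf0

variable [CompleteSpace H] [MeasurableSingletonClass 𝒳] {π : ℕ → 𝒳 → (H →L[ℂ] H)}

lemma map_indicator_cyl (hΦ : IsIntegralRepresentation μ Φ)
    (hμ : ∀ ω : DensityState H, IsLSW π ω.val (μ ω)) {n : ℕ} (v : Fin n → 𝒳) :
    Φ (Set.indicator (cyl v) fun _ => (1 : ℂ)) = histOp π v * star (histOp π v) := by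
  refine ContinuousLinearMap.ext_of_inner_unit fun ψ hψ => ?_
  have hχ : Measurable (Set.indicator (cyl v) fun _ => (1 : ℂ)) :=
    measurable_const.indicator (measurableSet_cyl v)
  have hbound : ∀ ξ, ‖Set.indicator (cyl v) (fun _ => (1 : ℂ)) ξ‖ ≤ 1 := fun ξ => by
    by_cases h : ξ ∈ cyl v <;> simp [h]
  have hnorm := ContinuousLinearMap.inner_apply_mul_star_self (histOp π v) ψ
  have hcyl := hμ (DensityState.ofUnit ψ hψ) n v
  rw [DensityState.ofUnit_val, hnorm, Complex.ofReal_re] at hcyl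
  rw [← DensityState.ofUnit_val ψ hψ, hΦ _ hχ ⟨1, hbound⟩,
    integral_indicator_const _ (measurableSet_cyl v), measureReal_def, hcyl,
    ENNReal.toReal_ofReal (sq_nonneg _), Complex.real_smul, mul_one, hnorm]

lemma isLSW_sqrt_mul_mul_sqrt (hΦ : IsIntegralRepresentation μ Φ)
    (hμ : ∀ ω : DensityState H, IsLSW π ω.val (μ ω)) (hf : Measurable f) {C : ℝ}
    (hC : ∀ ξ, ‖f ξ‖ ≤ C) (hf0 : ∀ ξ, 0 ≤ f ξ)
    (hcomm : ∀ (n : ℕ) (v : Fin n → 𝒳),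
      Commute (Φ fun ξ => (f ξ : ℂ)) (histOp π v * star (histOp π v)))
    (hmul : ∀ (n : ℕ) (v : Fin n → 𝒳),
      Φ (fun ξ => (f ξ : ℂ) * Set.indicator (cyl v) (fun _ => (1 : ℂ)) ξ)
        = Φ (fun ξ => (f ξ : ℂ)) * Φ (Set.indicator (cyl v) fun _ => (1 : ℂ)))
    (ω : DensityState H) :
    IsLSW π
      (fun A => ω.val (CFC.sqrt (Φ fun ξ => (f ξ : ℂ)) * A * CFC.sqrt (Φ fun ξ => (f ξ : ℂ))))
      ((μ ω).withDensity fun ξ => ENNReal.ofReal (f ξ)) := by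
  intro n v
  have := (hμ ω).isFiniteMeasure
  have hcyl := measurableSet_cyl v
  have hrestrict : (fun ξ => (f ξ : ℂ) * Set.indicator (cyl v) (fun _ => (1 : ℂ)) ξ)
      = fun ξ => ((Set.indicator (cyl v) f ξ : ℝ) : ℂ) := by
    funext ξ
    by_cases h : ξ ∈ cyl v <;> simp [h]
  rw [withDensity_ofReal_apply (.of_bound hf.aestronglyMeasurable C (ae_of_all _ hC)) hf0 hcyl]
  dsimp only
  rw [CFC.sqrt_mul_mul_sqrt_of_commute (hΦ.nonneg hf hC hf0) (hcomm n v),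
    ← hΦ.map_indicator_cyl hμ v, ← hmul n v, hrestrict,
    hΦ.val_ofReal (hf.indicator hcyl) (fun ξ => (norm_indicator_le_norm_self _ _).trans (hC ξ)),
    Complex.ofReal_re, integral_indicator hcyl]

end IsIntegralRepresentation

theorem dual_functional_measure_general
    {H 𝒳 : Type*} [NormedAddCommGroup H] [InnerProductSpace ℂ H] [CompleteSpace H]
    [MeasurableSpace 𝒳] [MeasurableSingletonClass 𝒳]
    (π : ℕ → 𝒳 → (H →L[ℂ] H))
    (E : VonNeumannAlgebra H) (hE : ∀ k x, π k x ∈ E)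
    (μ : DensityState H → Measure (ℕ → 𝒳))
    (hμ : ∀ ω : DensityState H, IsLSW π ω.val (μ ω))
    (Φ : ((ℕ → 𝒳) → ℂ) → (H →L[ℂ] H))
    (hΦ : ∀ f : (ℕ → 𝒳) → ℂ, Measurable f → (∃ C, ∀ ξ, ‖f ξ‖ ≤ C) →
      ∀ ω : DensityState H, ω.val (Φ f) = ∫ ξ, f ξ ∂(μ ω))
    -- Φ(f) is central in ℰ⁻ for every bounded tail-measurable f:
    (hcentral : ∀ f : (ℕ → 𝒳) → ℂ, @Measurable _ _ (tailAlg 𝒳) _ f →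
      (∃ C, ∀ ξ, ‖f ξ‖ ≤ C) → ∀ B ∈ E, Φ f * B = B * Φ f)
    -- Φ(f·χ_Δ) = Φ(f)Φ(χ_Δ) for cylinder sets Δ:
    (hmul : ∀ f : (ℕ → 𝒳) → ℂ, @Measurable _ _ (tailAlg 𝒳) _ f →
      (∃ C, ∀ ξ, ‖f ξ‖ ≤ C) → ∀ Δ : Set (ℕ → 𝒳), IsCylinder Δ →
        Φ (fun ξ => f ξ * Set.indicator Δ (fun _ => (1 : ℂ)) ξ)
          = Φ f * Φ (Set.indicator Δ (fun _ => (1 : ℂ))))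
    -- data: nonnegative bounded tail-measurable f and a normal state ω:
    (f : (ℕ → 𝒳) → ℝ) (hf0 : ∀ ξ, 0 ≤ f ξ)
    (hf : @Measurable _ _ (tailAlg 𝒳) _ f) (C : ℝ) (hC : ∀ ξ, ‖f ξ‖ ≤ C)
    (ω : DensityState H) :
    IsLSW π
      (fun A => ω.val (CFC.sqrt (Φ (fun ξ => (f ξ : ℂ))) * A
        * CFC.sqrt (Φ (fun ξ => (f ξ : ℂ)))))
      ((μ ω).withDensity fun ξ => ENNReal.ofReal (f ξ)) ∧
    (ω.val (Φ (fun ξ => (f ξ : ℂ))) ≠ 0 →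
      IsLSW π
        (fun A => (ω.val (Φ (fun ξ => (f ξ : ℂ))))⁻¹
          * ω.val (CFC.sqrt (Φ (fun ξ => (f ξ : ℂ))) * A
            * CFC.sqrt (Φ (fun ξ => (f ξ : ℂ)))))
        (((((μ ω).withDensity fun ξ => ENNReal.ofReal (f ξ)) Set.univ)⁻¹
          • ((μ ω).withDensity fun ξ => ENNReal.ofReal (f ξ))))) := by
  have hΦ : IsIntegralRepresentation μ Φ := hΦ
  have hfm : Measurable f := hf.mono tailAlg_le le_rfl
  have hfc : Measurable[tailAlg 𝒳] fun ξ => (f ξ : ℂ) := hf.complex_ofReal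
  have hCc : ∃ C, ∀ ξ, ‖(f ξ : ℂ)‖ ≤ C := ⟨C, by simpa using hC⟩
  have hweighted := hΦ.isLSW_sqrt_mul_mul_sqrt hμ hfm hC hf0
    (fun _ v => hcentral _ hfc hCc _ (mul_mem (histOp_mem hE v) (star_mem (histOp_mem hE v))))
    (fun _ v => hmul _ hfc hCc _ (isCylinder_cyl v)) ω
  refine ⟨hweighted, fun hne => ?_⟩
  have := (hμ ω).isFiniteMeasure
  have hmass := withDensity_ofReal_apply (.of_bound hfm.aestronglyMeasurable C (ae_of_all _ hC))
    hf0 (μ := μ ω) MeasurableSet.univ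
  rw [Measure.restrict_univ] at hmass
  rw [hΦ.val_ofReal hfm hC ω] at hne ⊢
  exact hweighted.inv_smul
    ((integral_nonneg hf0).lt_of_ne (fun h => hne (by rw [← h, Complex.ofReal_zero]))) hmass

/-- for nonnegative tail-measurable `f` and a normal state `ω`, the functional
`Φ(f)^*(ω) : A ↦ ω(Φ(f)^{1/2} A Φ(f)^{1/2})` has LSW measure `μ_ω^f = f·μ_ω`; normalizing
by `ω(Φ(f)) ≠ 0` yields a state whose LSW measure is the normalized `f`-weighted measure. -/
theorem dual_functional_measure
    {H 𝒳 : Type*} [NormedAddCommGroup H] [InnerProductSpace ℂ H] [CompleteSpace H]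
    [TopologicalSpace.SeparableSpace H]
    [Fintype 𝒳] [Nonempty 𝒳] [MeasurableSpace 𝒳] [MeasurableSingletonClass 𝒳]
    (π : ℕ → 𝒳 → (H →L[ℂ] H))
    (hsa : ∀ k x, IsSelfAdjoint (π k x)) (hid : ∀ k x, IsIdempotentElem (π k x))
    (hsum : ∀ k, ∑ x : 𝒳, π k x = 1)
    (E : VonNeumannAlgebra H) (hE : ∀ k x, π k x ∈ E)
    (μ : DensityState H → Measure (ℕ → 𝒳))
    (hμ : ∀ ω : DensityState H, IsLSW π ω.val (μ ω))
    (Φ : ((ℕ → 𝒳) → ℂ) → (H →L[ℂ] H))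
    (hΦ : ∀ f : (ℕ → 𝒳) → ℂ, Measurable f → (∃ C, ∀ ξ, ‖f ξ‖ ≤ C) →
      ∀ ω : DensityState H, ω.val (Φ f) = ∫ ξ, f ξ ∂(μ ω))
    -- Φ(f) is central in ℰ⁻ for every bounded tail-measurable f:
    (hcentral : ∀ f : (ℕ → 𝒳) → ℂ, @Measurable _ _ (tailAlg 𝒳) _ f →
      (∃ C, ∀ ξ, ‖f ξ‖ ≤ C) → ∀ B ∈ E, Φ f * B = B * Φ f)
    -- Φ(f·χ_Δ) = Φ(f)Φ(χ_Δ) for cylinder sets Δ: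
    (hmul : ∀ f : (ℕ → 𝒳) → ℂ, @Measurable _ _ (tailAlg 𝒳) _ f →
      (∃ C, ∀ ξ, ‖f ξ‖ ≤ C) → ∀ Δ : Set (ℕ → 𝒳), IsCylinder Δ →
        Φ (fun ξ => f ξ * Set.indicator Δ (fun _ => (1 : ℂ)) ξ)
          = Φ f * Φ (Set.indicator Δ (fun _ => (1 : ℂ))))
    -- data: nonnegative bounded tail-measurable f and a normal state ω:
    (f : (ℕ → 𝒳) → ℝ) (hf0 : ∀ ξ, 0 ≤ f ξ)
    (hf : @Measurable _ _ (tailAlg 𝒳) _ f) (C : ℝ) (hC : ∀ ξ, ‖f ξ‖ ≤ C)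
    (ω : DensityState H) :
    IsLSW π
      (fun A => ω.val (CFC.sqrt (Φ (fun ξ => (f ξ : ℂ))) * A
        * CFC.sqrt (Φ (fun ξ => (f ξ : ℂ)))))
      ((μ ω).withDensity fun ξ => ENNReal.ofReal (f ξ)) ∧
    (ω.val (Φ (fun ξ => (f ξ : ℂ))) ≠ 0 →
      IsLSW π
        (fun A => (ω.val (Φ (fun ξ => (f ξ : ℂ))))⁻¹
          * ω.val (CFC.sqrt (Φ (fun ξ => (f ξ : ℂ))) * A
            * CFC.sqrt (Φ (fun ξ => (f ξ : ℂ)))))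
        (((((μ ω).withDensity fun ξ => ENNReal.ofReal (f ξ)) Set.univ)⁻¹
          • ((μ ω).withDensity fun ξ => ENNReal.ofReal (f ξ))))) :=
  dual_functional_measure_general π E hE μ hμ Φ hΦ hcentral hmul f hf0 hf C hC ω
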